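/- Suppose the quadratic form Q(x) = ⟨x, T x⟩ is a Legendre form, the feasible set F is nonempty, and the only v in the recession cone of F with ⟨v, T v⟩ ≤ 0 is v = 0. Then the solution set of min f over F is nonempty, closed and bounded. -/

import Mathlib

noncomputable section
open Filter Topology RealInnerProductSpace

/-- weak convergence of a sequence in a Hilbert space -/
def WeakConv {H : Type*} [NormedAddCommGroup H] [InnerProductSpace ℝ H]
    (x : ℕ → H) (x₀ : H) : Prop :=
  ∀ y : H, Tendsto (fun k => ⟪x k, y⟫) atTop (𝓝 ⟪x₀, y⟫)

/-- weak lower semicontinuity: lower semicontinuity for the weak topology -/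
def WeaklyLSC {H : Type*} [NormedAddCommGroup H] [InnerProductSpace ℝ H]
    (Q : H → ℝ) : Prop :=
  LowerSemicontinuous fun x : WeakSpace ℝ H => Q ((toWeakSpace ℝ H).symm x)

/-- `Q` is a Legendre form: weakly lsc, and any sequence converging weakly to `x₀`
with `Q (x k) → Q x₀` converges strongly to `x₀`. -/
def IsLegendreForm {H : Type*} [NormedAddCommGroup H] [InnerProductSpace ℝ H]
    (Q : H → ℝ) : Prop :=
  WeaklyLSC Q ∧ ∀ (x : ℕ → H) (x₀ : H), WeakConv x x₀ →
    Tendsto (fun k => Q (x k)) atTop (𝓝 (Q x₀)) → Tendsto x atTop (𝓝 x₀)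

/-!
A bounded sequence in a Hilbert space has a weakly convergent subsequence (sequential
Banach–Alaoglu in the closed span of the sequence, which is separable). The constraint functions
(positive semidefinite quadratics) and the objective (through the Legendre form) are weakly
sequentially lower semicontinuous, so the direct method produces a minimiser once the sublevel
sets of `f` on `F` are bounded.

If such a sublevel set were unbounded, an escaping sequence `z k` would have normalisations
`w k = z k / ‖z k‖` converging weakly to some `v₀`. Dividing the constraints and the bound on `f`
by `‖z k‖²` and `‖z k‖` shows that `v₀` lies in the recession cone of `F` and that
`⟪v₀, T v₀⟫ ≤ 0`, so `v₀ = 0`. Then `⟪w k, T (w k)⟫ → 0 = ⟪v₀, T v₀⟫`, and the Legendre property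
makes `w k → 0` strongly, contradicting `‖w k‖ = 1`.
-/

section

variable {H : Type*} [NormedAddCommGroup H] [InnerProductSpace ℝ H]

theorem WeakConv.tendsto_inner_left {x : ℕ → H} {x₀ : H} (h : WeakConv x x₀) (y : H) :
    Tendsto (fun k => ⟪y, x k⟫) atTop (𝓝 ⟪y, x₀⟫) := by
  simpa only [real_inner_comm y] using h y

theorem WeakConv.of_tendsto {x : ℕ → H} {x₀ : H} (h : Tendsto x atTop (𝓝 x₀)) :
    WeakConv x x₀ :=
  fun _ => h.inner tendsto_const_nhds

theorem WeakConv.tendsto_toWeakSpace [CompleteSpace H] {x : ℕ → H} {x₀ : H} (h : WeakConv x x₀) :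
    Tendsto (fun k => toWeakSpace ℝ H (x k)) atTop (𝓝 (toWeakSpace ℝ H x₀)) := by
  have hind : IsInducing fun (z : WeakSpace ℝ H) (ℓ : StrongDual ℝ H) => ℓ z := ⟨rfl⟩
  refine hind.tendsto_nhds_iff.2 (tendsto_pi_nhds.2 fun ℓ => ?_)
  have hℓ : ∀ z, ⟪z, (InnerProductSpace.toDual ℝ H).symm ℓ⟫ = ℓ z := fun z =>
    (real_inner_comm _ _).trans InnerProductSpace.toDual_symm_apply
  have := h ((InnerProductSpace.toDual ℝ H).symm ℓ)
  simp only [hℓ] at this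
  exact this

/-- Stated with upper bounds `u k → L`, so that `g (x k)` itself need not converge. -/
def WeaklySeqLSC (g : H → ℝ) : Prop :=
  ∀ ⦃x : ℕ → H⦄ ⦃x₀ : H⦄ ⦃u : ℕ → ℝ⦄ ⦃L : ℝ⦄, WeakConv x x₀ → Tendsto u atTop (𝓝 L) →
    (∀ᶠ k in atTop, g (x k) ≤ u k) → g x₀ ≤ L

def IsWeaklySeqClosed (s : Set H) : Prop :=
  ∀ ⦃x : ℕ → H⦄ ⦃x₀ : H⦄, (∀ k, x k ∈ s) → WeakConv x x₀ → x₀ ∈ s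

theorem IsWeaklySeqClosed.isClosed {s : Set H} (hs : IsWeaklySeqClosed s) : IsClosed s :=
  IsSeqClosed.isClosed fun _ _ hx hlim => hs hx (.of_tendsto hlim)

namespace WeaklySeqLSC

variable {g : H → ℝ}

theorem le_of_forall_le (hg : WeaklySeqLSC g) {x : ℕ → H} {x₀ : H} (hx : WeakConv x x₀) {b : ℝ}
    (hb : ∀ k, g (x k) ≤ b) : g x₀ ≤ b :=
  hg hx tendsto_const_nhds (.of_forall hb)

theorem const_mul (hg : WeaklySeqLSC g) {r : ℝ} (hr : 0 < r) : WeaklySeqLSC fun x => r * g x := by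
  intro x x₀ u L hx hu hle
  have := hg hx (hu.div_const r) (hle.mono fun k hk => by rwa [le_div_iff₀' hr])
  rwa [le_div_iff₀' hr] at this

theorem add_inner (hg : WeaklySeqLSC g) (a : H) : WeaklySeqLSC fun x => g x + ⟪a, x⟫ := by
  intro x x₀ u L hx hu hle
  have := hg hx (hu.sub (hx.tendsto_inner_left a)) (hle.mono fun k hk => by linarith)
  linarith

theorem add_const (hg : WeaklySeqLSC g) (β : ℝ) : WeaklySeqLSC fun x => g x + β := by
  intro x x₀ u L hx hu hle
  have := hg hx (hu.sub_const β) (hle.mono fun k hk => by linarith)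
  linarith

end WeaklySeqLSC

namespace ContinuousLinearMap.IsPositive

variable {S : H →L[ℝ] H}

theorem apply_eq_zero_of_inner_self_eq_zero (hS : S.IsPositive) {v : H} (hv : ⟪v, S v⟫ = 0) :
    S v = 0 := by
  -- `t ↦ ⟪S v + t • v, S (S v + t • v)⟫` is nonnegative and, as `⟪v, S v⟫ = 0`, affine in `t`.
  have hquad : ∀ t : ℝ, 0 ≤ 0 * (t * t) + 2 * ⟪S v, S v⟫ * t + ⟪S v, S (S v)⟫ := fun t => by
    have := hS.inner_nonneg_right (S v + t • v)
    rw [map_add, map_smul, inner_add_left, inner_add_right, inner_add_right, real_inner_smul_left,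
      real_inner_smul_left, real_inner_smul_right, real_inner_smul_right, hv,
      ← hS.inner_left_eq_inner_right v (S v)] at this
    linarith
  have hdisc := discrim_le_zero hquad
  rw [discrim] at hdisc
  have hzero : ⟪S v, S v⟫ = 0 := by nlinarith [real_inner_self_nonneg (x := S v)]
  exact inner_self_eq_zero.1 hzero

theorem weaklySeqLSC_inner_self (hS : S.IsPositive) : WeaklySeqLSC fun x => ⟪x, S x⟫ := by
  intro x x₀ u L hx hu hle
  have hlow : ∀ k, 2 * ⟪x k, S x₀⟫ - ⟪x₀, S x₀⟫ ≤ ⟪x k, S (x k)⟫ := fun k => by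
    have := hS.inner_nonneg_right (x k - x₀)
    rw [map_sub, inner_sub_left, inner_sub_right, inner_sub_right,
      ← hS.inner_left_eq_inner_right x₀ (x k)] at this
    linarith [real_inner_comm (x k) (S x₀)]
  have := le_of_tendsto_of_tendsto (((hx (S x₀)).const_mul 2).sub_const ⟪x₀, S x₀⟫) hu
    (hle.mono fun k hk => (hlow k).trans hk)
  linarith

end ContinuousLinearMap.IsPositive

theorem exists_tendsto_zero_inner_normalize_self_le (S : H →L[ℝ] H) {z : ℕ → H} {a : H} {b : ℝ}
    (hz : Tendsto (fun k => ‖z k‖) atTop atTop)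
    (hb : ∀ k, (1 / 2) * ⟪z k, S (z k)⟫ + ⟪a, z k⟫ ≤ b) :
    ∃ u : ℕ → ℝ, Tendsto u atTop (𝓝 0) ∧
      ∀ᶠ k in atTop, ⟪‖z k‖⁻¹ • z k, S (‖z k‖⁻¹ • z k)⟫ ≤ u k := by
  have hinv : Tendsto (fun k => ‖z k‖⁻¹) atTop (𝓝 0) := tendsto_inv_atTop_zero.comp hz
  refine ⟨fun k => 2 * (‖a‖ * ‖z k‖⁻¹ + b * ‖z k‖⁻¹ ^ 2),
    by simpa using ((hinv.const_mul ‖a‖).add ((hinv.pow 2).const_mul b)).const_mul 2, ?_⟩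
  filter_upwards [hz.eventually_gt_atTop 0] with k hk
  have hQ : ⟪z k, S (z k)⟫ ≤ 2 * (b + ‖a‖ * ‖z k‖) := by
    linarith [hb k, neg_le_of_abs_le (abs_real_inner_le_norm a (z k))]
  calc ⟪‖z k‖⁻¹ • z k, S (‖z k‖⁻¹ • z k)⟫ = ‖z k‖⁻¹ ^ 2 * ⟪z k, S (z k)⟫ := by
        rw [map_smul, real_inner_smul_left, real_inner_smul_right]; ring
    _ ≤ ‖z k‖⁻¹ ^ 2 * (2 * (b + ‖a‖ * ‖z k‖)) := by gcongr
    _ = 2 * (‖a‖ * ‖z k‖⁻¹ + b * ‖z k‖⁻¹ ^ 2) := by field_simp; ring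

theorem ContinuousLinearMap.IsPositive.apply_eq_zero_and_inner_nonpos_of_weakConv_normalize
    {S : H →L[ℝ] H} (hS : S.IsPositive) {z : ℕ → H} {a : H} {b : ℝ}
    (hz : Tendsto (fun k => ‖z k‖) atTop atTop)
    (hb : ∀ k, (1 / 2) * ⟪z k, S (z k)⟫ + ⟪a, z k⟫ ≤ b) {v₀ : H}
    (hv : WeakConv (fun k => ‖z k‖⁻¹ • z k) v₀) :
    S v₀ = 0 ∧ ⟪a, v₀⟫ ≤ 0 := by
  obtain ⟨u, hu, hle⟩ := exists_tendsto_zero_inner_normalize_self_le S hz hb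
  refine ⟨hS.apply_eq_zero_of_inner_self_eq_zero
    (le_antisymm (hS.weaklySeqLSC_inner_self hv hu hle) (hS.inner_nonneg_right v₀)), ?_⟩
  have hlin : Tendsto (fun k => ‖z k‖⁻¹ * b) atTop (𝓝 0) := by
    simpa using (tendsto_inv_atTop_zero.comp hz).mul_const b
  refine le_of_tendsto_of_tendsto' (hv.tendsto_inner_left a) hlin fun k => ?_
  rw [real_inner_smul_right]
  have hab : ⟪a, z k⟫ ≤ b := by linarith [hb k, hS.inner_nonneg_right (z k)]
  exact mul_le_mul_of_nonneg_left hab (inv_nonneg.2 (norm_nonneg _))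

variable [CompleteSpace H] {Q : H → ℝ}

theorem exists_strictMono_weakConv_of_separableSpace [TopologicalSpace.SeparableSpace H]
    {x : ℕ → H} {M : ℝ} (hx : ∀ k, ‖x k‖ ≤ M) :
    ∃ x₀ : H, ∃ φ : ℕ → ℕ, StrictMono φ ∧ WeakConv (x ∘ φ) x₀ := by
  have hball : ∀ k, StrongDual.toWeakDual (InnerProductSpace.toDual ℝ H (x k)) ∈
      WeakDual.toStrongDual ⁻¹' Metric.closedBall (0 : StrongDual ℝ H) M := fun k => by
    simpa using hx k
  obtain ⟨ℓ, -, φ, hφ, hlim⟩ := WeakDual.isSeqCompact_closedBall ℝ H 0 M hball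
  refine ⟨(InnerProductSpace.toDual ℝ H).symm (WeakDual.toStrongDual ℓ), φ, hφ, fun y => ?_⟩
  rw [InnerProductSpace.toDual_symm_apply]
  exact tendsto_iff_forall_eval_tendsto_topDualPairing.1 hlim y

theorem exists_strictMono_weakConv {x : ℕ → H} {M : ℝ} (hx : ∀ k, ‖x k‖ ≤ M) :
    ∃ x₀ : H, ∃ φ : ℕ → ℕ, StrictMono φ ∧ WeakConv (x ∘ φ) x₀ := by
  set K := (Submodule.span ℝ (Set.range x)).topologicalClosure
  have hxK : ∀ k, x k ∈ K := fun k =>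
    Submodule.le_topologicalClosure _ (Submodule.subset_span ⟨k, rfl⟩)
  have : CompleteSpace K := (Submodule.isClosed_topologicalClosure _).completeSpace_coe
  have : TopologicalSpace.SeparableSpace K :=
    (Set.countable_range x).isSeparable.span.closure.separableSpace
  obtain ⟨x₀, φ, hφ, hconv⟩ :=
    exists_strictMono_weakConv_of_separableSpace (x := fun k => (⟨x k, hxK k⟩ : K)) hx
  refine ⟨x₀, φ, hφ, fun y => ?_⟩
  -- pairing with `y` and with its orthogonal projection onto `K` agree on `K`
  simpa using hconv (K.orthogonalProjectionOnto y)

theorem WeaklyLSC.eventually_lt (hQ : WeaklyLSC Q) {x : ℕ → H} {x₀ : H} (hx : WeakConv x x₀)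
    {t : ℝ} (ht : t < Q x₀) : ∀ᶠ k in atTop, t < Q (x k) :=
  hx.tendsto_toWeakSpace.eventually (hQ (toWeakSpace ℝ H x₀) t ht)

theorem WeaklyLSC.weaklySeqLSC (hQ : WeaklyLSC Q) : WeaklySeqLSC Q := by
  intro x x₀ u L hx hu hle
  by_contra! hL
  obtain ⟨t, hLt, htQ⟩ := exists_between hL
  obtain ⟨k, hk, huk, hQk⟩ :=
    ((hQ.eventually_lt hx htQ).and ((hu.eventually (gt_mem_nhds hLt)).and hle)).exists
  linarith

theorem IsLegendreForm.tendsto_of_weakConv (hQ : IsLegendreForm Q) {x : ℕ → H} {x₀ : H}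
    (hx : WeakConv x x₀) {u : ℕ → ℝ} (hu : Tendsto u atTop (𝓝 (Q x₀)))
    (hle : ∀ᶠ k in atTop, Q (x k) ≤ u k) : Tendsto x atTop (𝓝 x₀) := by
  refine hQ.2 x x₀ hx (tendsto_order.2 ⟨fun t ht => hQ.1.eventually_lt hx ht, fun t ht => ?_⟩)
  filter_upwards [hle, hu.eventually (gt_mem_nhds ht)] with k hQk huk
  exact hQk.trans_lt huk

theorem exists_weakConv_normalize_of_not_isBounded {s : Set H}
    (hs : ¬Bornology.IsBounded s) :
    ∃ z : ℕ → H, ∃ v₀ : H, (∀ k, z k ∈ s) ∧ Tendsto (fun k => ‖z k‖) atTop atTop ∧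
      WeakConv (fun k => ‖z k‖⁻¹ • z k) v₀ := by
  simp only [isBounded_iff_forall_norm_le, not_exists, not_forall, not_le] at hs
  choose y hys hy using fun n : ℕ => hs n
  have hnorm : ∀ n, ‖‖y n‖⁻¹ • y n‖ ≤ 1 := fun n => by
    rw [norm_smul, norm_inv, norm_norm]
    exact inv_mul_le_one
  obtain ⟨v₀, φ, hφ, hv⟩ := exists_strictMono_weakConv hnorm
  refine ⟨y ∘ φ, v₀, fun k => hys (φ k), tendsto_atTop_mono (fun k => ?_)
    tendsto_natCast_atTop_atTop, hv⟩
  exact (Nat.cast_le.2 (hφ.id_le k)).trans (hy (φ k)).le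

theorem isBounded_setOf_quadratic_le {m : ℕ} (T : H →L[ℝ] H) (c : H)
    (Ts : Fin m → H →L[ℝ] H) (cs : Fin m → H) (αs : Fin m → ℝ)
    (hTs : ∀ i, (Ts i).IsPositive) (hLeg : IsLegendreForm fun x : H => ⟪x, T x⟫)
    (hrec : ∀ v : H, (∀ i, Ts i v = 0 ∧ ⟪cs i, v⟫ ≤ 0) → ⟪v, T v⟫ ≤ 0 → v = 0) (C : ℝ) :
    Bornology.IsBounded {x : H | (∀ i, (1 / 2) * ⟪x, Ts i x⟫ + ⟪cs i, x⟫ + αs i ≤ 0) ∧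
      (1 / 2) * ⟪x, T x⟫ + ⟪c, x⟫ ≤ C} := by
  by_contra hunb
  obtain ⟨z, v₀, hzs, hz, hv⟩ := exists_weakConv_normalize_of_not_isBounded hunb
  obtain ⟨u, hu, hle⟩ := exists_tendsto_zero_inner_normalize_self_le T hz fun k => (hzs k).2
  have hv₀ : v₀ = 0 := hrec v₀
    (fun i => (hTs i).apply_eq_zero_and_inner_nonpos_of_weakConv_normalize (b := -αs i) hz
      (fun k => by linarith [(hzs k).1 i]) hv)
    (hLeg.1.weaklySeqLSC hv hu hle)
  subst hv₀
  have hlim := hLeg.tendsto_of_weakConv hv (by simpa using hu) hle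
  have hone : ∀ᶠ k in atTop, ‖‖z k‖⁻¹ • z k‖ = 1 := by
    filter_upwards [hz.eventually_gt_atTop 0] with k hk
    rw [norm_smul, norm_inv, norm_norm, inv_mul_cancel₀ hk.ne']
  exact one_ne_zero (tendsto_nhds_unique (tendsto_const_nhds.congr' (hone.mono fun k hk => hk.symm))
    (by simpa using hlim.norm))

theorem WeaklySeqLSC.exists_isMinOn {g : H → ℝ} (hg : WeaklySeqLSC g) {s : Set H}
    (hb : Bornology.IsBounded s) (hs : IsWeaklySeqClosed s) (hne : s.Nonempty) :
    ∃ x₀ ∈ s, IsMinOn g s x₀ := by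
  obtain ⟨M, hM⟩ := isBounded_iff_forall_norm_le.1 hb
  have hsubseq : ∀ x : ℕ → H, (∀ k, x k ∈ s) →
      ∃ x₀ ∈ s, ∃ φ : ℕ → ℕ, StrictMono φ ∧ WeakConv (x ∘ φ) x₀ := fun x hx => by
    obtain ⟨x₀, φ, hφ, hconv⟩ := exists_strictMono_weakConv fun k => hM _ (hx k)
    exact ⟨x₀, hs (fun k => hx (φ k)) hconv, φ, hφ, hconv⟩
  have hbdd : BddBelow (g '' s) := by
    by_contra hnb
    simp only [not_bddBelow_iff, Set.exists_mem_image] at hnb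
    choose x hxs hx using fun n : ℕ => hnb (-n)
    obtain ⟨x₀, -, φ, hφ, hconv⟩ := hsubseq x hxs
    have hfar : ∀ᶠ k in atTop, g (x (φ k)) ≤ g x₀ - 1 := by
      filter_upwards [(tendsto_natCast_atTop_atTop.comp hφ.tendsto_atTop).eventually_ge_atTop
        (1 - g x₀)] with k hk
      linarith [hx (φ k), show (1 - g x₀ : ℝ) ≤ φ k from hk]
    linarith [hg hconv tendsto_const_nhds hfar]
  obtain ⟨y, -, hy, hys⟩ := exists_seq_tendsto_sInf (hne.image g) hbdd
  choose x hxs hxy using hys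
  obtain ⟨x₀, hx₀, φ, hφ, hconv⟩ := hsubseq x hxs
  refine ⟨x₀, hx₀, fun x' hx' => ?_⟩
  calc g x₀ ≤ sInf (g '' s) :=
        hg hconv (hy.comp hφ.tendsto_atTop) (.of_forall fun k => (hxy (φ k)).le)
    _ ≤ g x' := csInf_le hbdd ⟨x', hx', rfl⟩

end

theorem stmt5_general {H : Type*} [NormedAddCommGroup H] [InnerProductSpace ℝ H] [CompleteSpace H]
    {m : ℕ} (T : H →L[ℝ] H) (c : H)
    (Ts : Fin m → H →L[ℝ] H) (cs : Fin m → H) (αs : Fin m → ℝ)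
    (hsa : ∀ i, ∀ x y : H, ⟪Ts i x, y⟫ = ⟪x, Ts i y⟫)
    (hpsd : ∀ i, ∀ x : H, 0 ≤ ⟪x, Ts i x⟫)
    (hLeg : IsLegendreForm (fun x : H => ⟪x, T x⟫))
    (f : H → ℝ) (hf : f = fun x => (1 / 2) * ⟪x, T x⟫ + ⟪c, x⟫)
    (F : Set H)
    (hF : F = {x : H | ∀ i, (1 / 2) * ⟪x, Ts i x⟫ + ⟪cs i, x⟫ + αs i ≤ 0})
    (hne : F.Nonempty)
    (hQPR : ∀ v : H, (∀ i, Ts i v = 0 ∧ ⟪cs i, v⟫ ≤ 0) → ⟪v, T v⟫ ≤ 0 → v = 0)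
    (Sol : Set H) (hSol : Sol = {x ∈ F | ∀ y ∈ F, f x ≤ f y}) :
    Sol.Nonempty ∧ IsClosed Sol ∧ Bornology.IsBounded Sol := by
  subst hSol
  have hTs : ∀ i, (Ts i).IsPositive := fun i =>
    (Ts i).isPositive_iff.2 ⟨hsa i, fun x => real_inner_comm x (Ts i x) ▸ hpsd i x⟩
  have hfl : WeaklySeqLSC f := hf ▸ (hLeg.1.weaklySeqLSC.const_mul one_half_pos).add_inner c
  have hFc : IsWeaklySeqClosed F := hF ▸ fun x x₀ hx hconv i =>
    ((((hTs i).weaklySeqLSC_inner_self.const_mul one_half_pos).add_inner (cs i)).add_const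
      (αs i)).le_of_forall_le hconv fun k => hx k i
  have hbdd : ∀ C, Bornology.IsBounded {x ∈ F | f x ≤ C} := fun C => by
    subst hf hF
    exact isBounded_setOf_quadratic_le T c Ts cs αs hTs hLeg hQPR C
  obtain ⟨xb, hxb⟩ := hne
  have hsublevel : IsWeaklySeqClosed {x ∈ F | f x ≤ f xb} := fun x w hx hconv =>
    ⟨hFc (fun k => (hx k).1) hconv, hfl.le_of_forall_le hconv fun k => (hx k).2⟩
  obtain ⟨x₀, ⟨hx₀F, -⟩, hmin⟩ := hfl.exists_isMinOn (hbdd (f xb)) hsublevel ⟨xb, hxb, le_rfl⟩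
  have hx₀ : ∀ y ∈ F, f x₀ ≤ f y := fun y hy => by
    by_cases hy' : f y ≤ f xb
    · exact hmin ⟨hy, hy'⟩
    · exact (hmin ⟨hxb, le_rfl⟩).trans (le_of_not_ge hy')
  have hSol : IsWeaklySeqClosed {x ∈ F | ∀ y ∈ F, f x ≤ f y} := fun x w hx hconv =>
    ⟨hFc (fun k => (hx k).1) hconv, fun y hy => hfl.le_of_forall_le hconv fun k => (hx k).2 y hy⟩
  exact ⟨⟨x₀, hx₀F, hx₀⟩, hSol.isClosed, (hbdd (f xb)).subset fun x hx => ⟨hx.1, hx.2 xb hxb⟩⟩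

/-- If `⟪x, T x⟫` is a Legendre form, the feasible set `F` is nonempty,
and the only `v` in the recession cone of `F` with `⟪v, T v⟫ ≤ 0` is `v = 0`, then the
solution set of `min f` over `F` is nonempty, closed and bounded. -/
theorem stmt5 {H : Type*} [NormedAddCommGroup H] [InnerProductSpace ℝ H] [CompleteSpace H]
    {m : ℕ} (T : H →L[ℝ] H) (c : H)
    (Ts : Fin m → H →L[ℝ] H) (cs : Fin m → H) (αs : Fin m → ℝ)
    (hTsa : ∀ x y : H, ⟪T x, y⟫ = ⟪x, T y⟫)
    (hsa : ∀ i, ∀ x y : H, ⟪Ts i x, y⟫ = ⟪x, Ts i y⟫)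
    (hpsd : ∀ i, ∀ x : H, 0 ≤ ⟪x, Ts i x⟫)
    (hLeg : IsLegendreForm (fun x : H => ⟪x, T x⟫))
    (f : H → ℝ) (hf : f = fun x => (1 / 2) * ⟪x, T x⟫ + ⟪c, x⟫)
    (F : Set H)
    (hF : F = {x : H | ∀ i, (1 / 2) * ⟪x, Ts i x⟫ + ⟪cs i, x⟫ + αs i ≤ 0})
    (hne : F.Nonempty)
    (hQPR : ∀ v : H, (∀ i, Ts i v = 0 ∧ ⟪cs i, v⟫ ≤ 0) → ⟪v, T v⟫ ≤ 0 → v = 0)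
    (Sol : Set H) (hSol : Sol = {x ∈ F | ∀ y ∈ F, f x ≤ f y}) :
    Sol.Nonempty ∧ IsClosed Sol ∧ Bornology.IsBounded Sol :=
  stmt5_general T c Ts cs αs hsa hpsd hLeg f hf F hF hne hQPR Sol hSol
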